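/- (Reidemeister I move on Gauss codes preserves parity.) Let G = P ++ Q be a signed Gauss code, let ℓ be a label not occurring in G, let ε ∈ {+, −}, and let G' = P ++ [(ℓ, u, ε), (ℓ, o, ε)] ++ Q (or P ++ [(ℓ, o, ε), (ℓ, u, ε)] ++ Q) be obtained by inserting an adjacent pair with the new label ℓ. Then every crossing of G is a crossing of G' with the same parity, and the new crossing ℓ is an even crossing of G'. -/

import Mathlib

/-- The marker recording whether an entry of a Gauss code lies on the
understrand (`u`) or overstrand (`o`) of the crossing. -/
inductive Strand : Type
  | u : Strand
  | o : Strand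
deriving DecidableEq

/-- The sign of a crossing. -/
inductive GSign : Type
  | pos : GSign
  | neg : GSign
deriving DecidableEq

/-- An entry `(ℓ, m, ε)` of a signed Gauss code: a label, a strand marker, and a sign.
A signed Gauss code is a `List (GaussEntry L)`. -/
abbrev GaussEntry (L : Type u) : Type u := L × Strand × GSign

/-- A label `ℓ` is a crossing of the signed Gauss code `G` if it occurs in exactly two
entries of `G`, once with marker `u` and once with marker `o`, both with the same sign. -/
def IsCrossing {L : Type u} [DecidableEq L] (G : List (GaussEntry L)) (ℓ : L) : Prop :=
  G.countP (fun e => decide (e.1 = ℓ)) = 2 ∧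
  ∃ ε : GSign, (ℓ, Strand.u, ε) ∈ G ∧ (ℓ, Strand.o, ε) ∈ G

/-- The number of entries of `G` lying strictly between the two occurrences of the
label `ℓ` (for `ℓ` occurring exactly twice in `G`). -/
def betweenCount {L : Type u} [DecidableEq L] (G : List (GaussEntry L)) (ℓ : L) : ℕ :=
  (G.drop (G.findIdx (fun e => decide (e.1 = ℓ)) + 1)).findIdx (fun e => decide (e.1 = ℓ))

/-- The parity of the crossing `ℓ` in `G`: the residue mod 2 of the number of entries of
`G` lying strictly between the two occurrences of `ℓ` (`0` = even, `1` = odd). -/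
def crossingParity {L : Type u} [DecidableEq L] (G : List (GaussEntry L)) (ℓ : L) : ℕ :=
  betweenCount G ℓ % 2


lemma my_decomp1 {α : Type*} (p : α → Bool) :
    ∀ l : List α, l.countP p = 1 →
      ∃ A x B, l = A ++ x :: B ∧ p x = true ∧ (∀ a ∈ A, p a = false) ∧ ∀ b ∈ B, p b = false
  | [], h => by rw [List.countP_nil] at h; omega
  | x :: t, h => by
    by_cases hx : p x = true
    · refine ⟨[], x, t, rfl, hx, by simp, ?_⟩
      have h0 : t.countP p = 0 := by
        rw [List.countP_cons_of_pos hx] at h; omega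
      intro b hb
      simpa using (List.countP_eq_zero.mp h0) b hb
    · have hx' : p x = false := by simpa using hx
      rw [List.countP_cons_of_neg (by simp [hx'])] at h
      obtain ⟨A, y, B, rfl, hy, hA, hB⟩ := my_decomp1 p t h
      refine ⟨x :: A, y, B, rfl, hy, ?_, hB⟩
      intro a ha
      rcases List.mem_cons.mp ha with rfl | ha
      · exact hx'
      · exact hA a ha

lemma my_decomp2 {α : Type*} (p : α → Bool) :
    ∀ l : List α, l.countP p = 2 →
      ∃ A x B y C, l = A ++ x :: (B ++ y :: C) ∧ p x = true ∧ p y = true ∧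
        (∀ a ∈ A, p a = false) ∧ (∀ b ∈ B, p b = false) ∧ ∀ c ∈ C, p c = false
  | [], h => by rw [List.countP_nil] at h; omega
  | x :: t, h => by
    by_cases hx : p x = true
    · rw [List.countP_cons_of_pos hx] at h
      obtain ⟨B, y, C, rfl, hy, hB, hC⟩ := my_decomp1 p t (by omega)
      exact ⟨[], x, B, y, C, rfl, hx, hy, by simp, hB, hC⟩
    · have hx' : p x = false := by simpa using hx
      rw [List.countP_cons_of_neg (by simp [hx'])] at h
      obtain ⟨A, y, B, z, C, rfl, hy, hz, hA, hB, hC⟩ := my_decomp2 p t h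
      refine ⟨x :: A, y, B, z, C, rfl, hy, hz, ?_, hB, hC⟩
      intro a ha
      rcases List.mem_cons.mp ha with rfl | ha
      · exact hx'
      · exact hA a ha

lemma my_findIdx_first {α : Type*} (p : α → Bool) {A : List α}
    (hA : ∀ a ∈ A, p a = false) {x : α} (hx : p x = true) (rest : List α) :
    (A ++ x :: rest).findIdx p = A.length := by
  induction A with
  | nil => simp [List.findIdx_cons, hx]
  | cons a t ih =>
    have ha : p a = false := hA a (by simp)
    simp [List.findIdx_cons, ha, ih fun b hb => hA b (by simp [hb])]

lemma my_between_decomp {L : Type*} [DecidableEq L] (ℓ : L)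
    (A : List (GaussEntry L)) (x : GaussEntry L) (B : List (GaussEntry L))
    (y : GaussEntry L) (C : List (GaussEntry L))
    (hA : ∀ a ∈ A, decide (a.1 = ℓ) = false) (hB : ∀ b ∈ B, decide (b.1 = ℓ) = false)
    (hx : decide (x.1 = ℓ) = true) (hy : decide (y.1 = ℓ) = true) :
    betweenCount (A ++ x :: (B ++ y :: C)) ℓ = B.length := by
  unfold betweenCount
  rw [my_findIdx_first _ hA hx]
  have h1 : A ++ x :: (B ++ y :: C) = (A ++ [x]) ++ (B ++ y :: C) := by simp
  have h2 : A.length + 1 = (A ++ [x]).length := by simp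
  rw [h1, h2, List.drop_left]
  exact my_findIdx_first _ hB hy _

lemma my_main_aux {L : Type*} [DecidableEq L] (P Q : List (GaussEntry L)) (ℓ₀ : L)
    (hfresh : ∀ e ∈ P ++ Q, e.1 ≠ ℓ₀) (e1 e2 : GaussEntry L)
    (h1 : e1.1 = ℓ₀) (h2 : e2.1 = ℓ₀) (ℓ : L) (hc : IsCrossing (P ++ Q) ℓ) :
    IsCrossing (P ++ e1 :: e2 :: Q) ℓ ∧
      crossingParity (P ++ e1 :: e2 :: Q) ℓ = crossingParity (P ++ Q) ℓ := by
  obtain ⟨hcnt, ε', hu, ho⟩ := hc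
  set p : GaussEntry L → Bool := fun e => decide (e.1 = ℓ) with hp
  have hℓ : ℓ ≠ ℓ₀ := by
    have := hfresh _ hu
    simpa using this
  have he1 : p e1 = false := by simp [hp, h1]; exact Ne.symm hℓ
  have he2 : p e2 = false := by simp [hp, h2]; exact Ne.symm hℓ
  have hcnt' : (P ++ e1 :: e2 :: Q).countP p = 2 := by
    rw [List.countP_append] at hcnt ⊢
    rw [List.countP_cons_of_neg (by simp [he1]),
        List.countP_cons_of_neg (by simp [he2])]
    exact hcnt
  refine ⟨⟨hcnt', ε', ?_, ?_⟩, ?_⟩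
  · rcases List.mem_append.mp hu with h | h
    · exact List.mem_append.mpr (Or.inl h)
    · exact List.mem_append.mpr (Or.inr (by simp [h]))
  · rcases List.mem_append.mp ho with h | h
    · exact List.mem_append.mpr (Or.inl h)
    · exact List.mem_append.mpr (Or.inr (by simp [h]))
  · -- parity
    rw [List.countP_append] at hcnt
    have hm : P.countP p = 0 ∨ P.countP p = 1 ∨ P.countP p = 2 := by omega
    rcases hm with hm | hm | hm
    · -- both occurrences in Q
      have hQ : Q.countP p = 2 := by omega
      obtain ⟨A, x, B, y, C, rfl, hx, hy, hA, hB, hC⟩ := my_decomp2 p Q hQ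
      have hPfalse : ∀ a ∈ P, p a = false := fun a ha => by
        simpa using List.countP_eq_zero.mp hm a ha
      have hA1 : ∀ a ∈ P ++ A, p a = false := by
        intro a ha
        rcases List.mem_append.mp ha with h | h
        · exact hPfalse a h
        · exact hA a h
      have hA2 : ∀ a ∈ P ++ e1 :: e2 :: A, p a = false := by
        intro a ha
        rcases List.mem_append.mp ha with h | h
        · exact hPfalse a h
        rcases List.mem_cons.mp h with rfl | h
        · exact he1
        rcases List.mem_cons.mp h with rfl | h
        · exact he2
        · exact hA a h
      have key1 : P ++ (A ++ x :: (B ++ y :: C)) = (P ++ A) ++ x :: (B ++ y :: C) := by simp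
      have key2 : P ++ e1 :: e2 :: (A ++ x :: (B ++ y :: C))
          = (P ++ e1 :: e2 :: A) ++ x :: (B ++ y :: C) := by simp
      unfold crossingParity
      rw [key1, key2, my_between_decomp ℓ _ x B y C hA2 hB hx hy,
          my_between_decomp ℓ _ x B y C hA1 hB hx hy]
    · -- one occurrence in each
      have hQ : Q.countP p = 1 := by omega
      obtain ⟨A, x, B, rfl, hx, hA, hB⟩ := my_decomp1 p P hm
      obtain ⟨C, y, D, rfl, hy, hCf, hD⟩ := my_decomp1 p Q hQ
      have hB1 : ∀ b ∈ B ++ C, p b = false := by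
        intro b hb
        rcases List.mem_append.mp hb with h | h
        · exact hB b h
        · exact hCf b h
      have hB2 : ∀ b ∈ B ++ e1 :: e2 :: C, p b = false := by
        intro b hb
        rcases List.mem_append.mp hb with h | h
        · exact hB b h
        rcases List.mem_cons.mp h with rfl | h
        · exact he1
        rcases List.mem_cons.mp h with rfl | h
        · exact he2
        · exact hCf b h
      have key1 : (A ++ x :: B) ++ (C ++ y :: D) = A ++ x :: ((B ++ C) ++ y :: D) := by simp
      have key2 : (A ++ x :: B) ++ e1 :: e2 :: (C ++ y :: D)
          = A ++ x :: ((B ++ e1 :: e2 :: C) ++ y :: D) := by simp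
      unfold crossingParity
      rw [key1, key2, my_between_decomp ℓ A x _ y D hA hB2 hx hy,
          my_between_decomp ℓ A x _ y D hA hB1 hx hy]
      simp [List.length_append]
      omega
    · -- both occurrences in P
      have hQfalse : ∀ b ∈ Q, p b = false := fun b hb => by
        simpa using List.countP_eq_zero.mp (show Q.countP p = 0 by omega) b hb
      obtain ⟨A, x, B, y, C, rfl, hx, hy, hA, hB, hC⟩ := my_decomp2 p P hm
      have key1 : (A ++ x :: (B ++ y :: C)) ++ Q = A ++ x :: (B ++ y :: (C ++ Q)) := by simp
      have key2 : (A ++ x :: (B ++ y :: C)) ++ e1 :: e2 :: Q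
          = A ++ x :: (B ++ y :: (C ++ e1 :: e2 :: Q)) := by simp
      unfold crossingParity
      rw [key1, key2, my_between_decomp ℓ A x B y _ hA hB hx hy,
          my_between_decomp ℓ A x B y _ hA hB hx hy]

lemma my_new_parity {L : Type*} [DecidableEq L] (P Q : List (GaussEntry L)) (ℓ₀ : L)
    (x y : GaussEntry L) (hx : x.1 = ℓ₀) (hy : y.1 = ℓ₀)
    (hP : ∀ a ∈ P, decide (a.1 = ℓ₀) = false) :
    crossingParity (P ++ x :: y :: Q) ℓ₀ = 0 := by
  have key : P ++ x :: y :: Q = P ++ x :: (([] : List (GaussEntry L)) ++ y :: Q) := by simp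
  unfold crossingParity
  rw [key, my_between_decomp ℓ₀ P x [] y Q hP (by simp) (by simp [hx]) (by simp [hy])]
  simp


/-- (Reidemeister I on Gauss codes preserves parity.) Inserting an adjacent
pair `(ℓ₀, u, ε), (ℓ₀, o, ε)` (in either order) with a fresh label `ℓ₀` into `G = P ++ Q`
turns every crossing of `G` into a crossing of `G'` with the same parity, and the new
crossing `ℓ₀` is an even crossing of `G'`. -/
theorem reidemeister_I_preserves_parity {L : Type*} [DecidableEq L]
    (P Q : List (GaussEntry L)) (ℓ₀ : L) (ε : GSign)
    (hfresh : ∀ e ∈ P ++ Q, e.1 ≠ ℓ₀)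
    (G G' : List (GaussEntry L)) (hG : G = P ++ Q)
    (hG' : G' = P ++ [(ℓ₀, Strand.u, ε), (ℓ₀, Strand.o, ε)] ++ Q ∨
           G' = P ++ [(ℓ₀, Strand.o, ε), (ℓ₀, Strand.u, ε)] ++ Q) :
    (∀ ℓ : L, IsCrossing G ℓ → IsCrossing G' ℓ ∧ crossingParity G' ℓ = crossingParity G ℓ) ∧
    IsCrossing G' ℓ₀ ∧ crossingParity G' ℓ₀ = 0 := by
  subst hG
  have hPf : ∀ a ∈ P, decide (a.1 = ℓ₀) = false := fun a ha => by
    simpa using hfresh a (List.mem_append.mpr (Or.inl ha))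
  have hQf : ∀ a ∈ Q, decide (a.1 = ℓ₀) = false := fun a ha => by
    simpa using hfresh a (List.mem_append.mpr (Or.inr ha))
  have hP0 : P.countP (fun e => decide (e.1 = ℓ₀)) = 0 := List.countP_eq_zero.mpr (by
    intro a ha; simp [hPf a ha])
  have hQ0 : Q.countP (fun e => decide (e.1 = ℓ₀)) = 0 := List.countP_eq_zero.mpr (by
    intro a ha; simp [hQf a ha])
  rcases hG' with rfl | rfl
  · have hform : P ++ [(ℓ₀, Strand.u, ε), (ℓ₀, Strand.o, ε)] ++ Q
        = P ++ (ℓ₀, Strand.u, ε) :: (ℓ₀, Strand.o, ε) :: Q := by simp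
    rw [hform]
    refine ⟨fun ℓ hc => my_main_aux P Q ℓ₀ hfresh _ _ rfl rfl ℓ hc, ⟨?_, ε, ?_, ?_⟩, ?_⟩
    · rw [List.countP_append, List.countP_cons_of_pos (by simp),
          List.countP_cons_of_pos (by simp), hP0, hQ0]
    · simp
    · simp
    · exact my_new_parity P Q ℓ₀ _ _ rfl rfl hPf
  · have hform : P ++ [(ℓ₀, Strand.o, ε), (ℓ₀, Strand.u, ε)] ++ Q
        = P ++ (ℓ₀, Strand.o, ε) :: (ℓ₀, Strand.u, ε) :: Q := by simp
    rw [hform]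
    refine ⟨fun ℓ hc => my_main_aux P Q ℓ₀ hfresh _ _ rfl rfl ℓ hc, ⟨?_, ε, ?_, ?_⟩, ?_⟩
    · rw [List.countP_append, List.countP_cons_of_pos (by simp),
          List.countP_cons_of_pos (by simp), hP0, hQ0]
    · simp
    · simp
    · exact my_new_parity P Q ℓ₀ _ _ rfl rfl hPf
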